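/- For Y ∈ ℝ let X(Y) denote the real 2×2 matrix with rows (0, −exp(Y/2)) and (exp(−Y/2), 0), let R be the 2×2 matrix with rows (1, 1) and (−1, 0), and let φ(t) = log(1 + exp t). Then for all real numbers A, D, Z: X(D) · R · X(Z) · R · X(A) = X(D − φ(−Z)) · R · X(A + φ(Z)). -/

import Mathlib

open Matrix

/-- The edge matrix `X(Y)` of Fock's fat-graph description. -/
noncomputable def edgeMatrix (Y : ℝ) : Matrix (Fin 2) (Fin 2) ℝ :=
  !![0, -Real.exp (Y / 2); Real.exp (-Y / 2), 0]

/-- The right-turn matrix `R`. -/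
def rightTurn : Matrix (Fin 2) (Fin 2) ℝ := !![1, 1; -1, 0]

/-- `φ(t) = log(1 + exp t)`. -/
noncomputable def phiFlip (t : ℝ) : ℝ := Real.log (1 + Real.exp t)

/-- The first flip identity of Lemma 2.4:
`X(D)·R·X(Z)·R·X(A) = X(D − φ(−Z))·R·X(A + φ(Z))`. -/
theorem flip_identity_RR (A D Z : ℝ) :
    edgeMatrix D * rightTurn * edgeMatrix Z * rightTurn * edgeMatrix A =
      edgeMatrix (D - phiFlip (-Z)) * rightTurn * edgeMatrix (A + phiFlip Z) := by
  have hposZ : (0:ℝ) < 1 + Real.exp Z := by positivity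
  have hposNZ : (0:ℝ) < 1 + Real.exp (-Z) := by positivity
  have hu2 : Real.exp (phiFlip Z / 2) ^ 2 = 1 + Real.exp Z := by
    rw [← Real.exp_nat_mul]
    have : ((2:ℕ):ℝ) * (phiFlip Z / 2) = phiFlip Z := by push_cast; ring
    rw [this, phiFlip, Real.exp_log hposZ]
  have hv2 : Real.exp (phiFlip (-Z) / 2) ^ 2 = 1 + Real.exp (-Z) := by
    rw [← Real.exp_nat_mul]
    have : ((2:ℕ):ℝ) * (phiFlip (-Z) / 2) = phiFlip (-Z) := by push_cast; ring
    rw [this, phiFlip, Real.exp_log hposNZ]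
  have hez : Real.exp (Z/2) * Real.exp (-(Z/2)) = 1 := by
    rw [← Real.exp_add]; norm_num
  have hezz : Real.exp (-Z) * Real.exp (Z/2) ^ 2 = 1 := by
    rw [sq, ← Real.exp_add, ← Real.exp_add]; norm_num
  have huv : Real.exp (phiFlip (-Z) / 2) * Real.exp (Z/2) = Real.exp (phiFlip Z / 2) := by
    have h1 : (Real.exp (phiFlip (-Z) / 2) * Real.exp (Z/2))^2 = Real.exp (phiFlip Z / 2)^2 := by
      rw [mul_pow, hv2, hu2, add_mul, one_mul, sq, ← Real.exp_add, ← Real.exp_add]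
      norm_num
      ring
    nlinarith [Real.exp_pos (phiFlip Z / 2),
      mul_pos (Real.exp_pos (phiFlip (-Z)/2)) (Real.exp_pos (Z/2)),
      sq_nonneg (Real.exp (phiFlip (-Z) / 2) * Real.exp (Z/2) - Real.exp (phiFlip Z / 2))]
  ext i j
  fin_cases i <;> fin_cases j <;>
    simp [edgeMatrix, rightTurn, Matrix.mul_apply, Fin.sum_univ_succ, sub_div, add_div,
      Real.exp_sub, Real.exp_add, neg_div, Real.exp_neg]
  · field_simp
    linear_combination huv
  · field_simp
    linear_combination (-1 : ℝ) * huv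
  · field_simp
    linear_combination (Real.exp (phiFlip (-Z)/2) * Real.exp (Z/2)) * huv
      - (Real.exp (Z/2)^2) * hv2
      - hezz
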